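/- arXiv:2310.13886 — 3 statements merged into one kernel-verified Lean document; each statement's English description precedes it below -/
import Mathlib

section
/- Let φ: ℝⁿ → ℝ be α-strongly convex with convex conjugate φ* differentiable at x. Then for all w ∈ ℝⁿ: φ(w) ≥ -φ*(x) + ⟨w, x⟩ + (α/2)‖w - ∇φ*(x)‖². -/
/-!
Strong convexity makes `v ↦ φ v - ⟪v, x⟫` coercive, so it attains its minimum at some `z`, and
then `φ* x = ⟪z, x⟫ - φ z`. For every `y` we get `φ* y ≥ ⟪z, y⟫ - φ z = φ* x + ⟪z, y - x⟫`, so `z`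
is a subgradient of `φ*` at `x` and therefore equals the gradient `g`. Finally, an `α`-strongly
convex function exceeds its minimum by at least `(α/2)‖w - z‖²` at `w`.
-/

noncomputable section

open Set

/-- The convex conjugate `φ*(y) = sup_x (⟪x,y⟫ - φ(x))`. -/
def conj {n : ℕ} (φ : EuclideanSpace ℝ (Fin n) → ℝ) (y : EuclideanSpace ℝ (Fin n)) : ℝ :=
  ⨆ x : EuclideanSpace ℝ (Fin n), ((inner ℝ x y : ℝ) - φ x)

open Filter Topology RealInnerProductSpace

section InnerProductSpace

variable {E : Type*} [NormedAddCommGroup E] [InnerProductSpace ℝ E] {f g : E → ℝ} {m : ℝ}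

lemma StrongConvexOn.sub_concaveOn {s : Set E} (hf : StrongConvexOn s m f)
    (hg : ConcaveOn ℝ s g) : StrongConvexOn s m (f - g) := by
  simpa [StrongConvexOn] using hf.sub hg.uniformConcaveOn_zero

lemma StrongConvexOn.add_sq_le_of_isMinOn {s : Set E} (hf : StrongConvexOn s m f) {z w : E}
    (hz : z ∈ s) (hw : w ∈ s) (hmin : IsMinOn f s z) :
    f z + m / 2 * ‖w - z‖ ^ 2 ≤ f w := by
  -- comparing `f z` with `f (t • w + (1 - t) • z)` gives the claim up to a factor `1 - t`
  have hseg : ∀ t ∈ Ioo (0 : ℝ) 1, f z + (1 - t) * (m / 2 * ‖w - z‖ ^ 2) ≤ f w := by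
    rintro t ⟨ht₀, ht₁⟩
    have hconv := hf.2 hw hz ht₀.le (sub_nonneg.2 ht₁.le) (add_sub_cancel t 1)
    have hle : f z ≤ f (t • w + (1 - t) • z) := hmin (hf.1 hw hz ht₀.le (sub_nonneg.2 ht₁.le)
      (add_sub_cancel t 1))
    simp only [smul_eq_mul] at hconv
    nlinarith
  have hlim : Tendsto (fun t : ℝ => f z + (1 - t) * (m / 2 * ‖w - z‖ ^ 2)) (𝓝[>] 0)
      (𝓝 (f z + m / 2 * ‖w - z‖ ^ 2)) :=
    tendsto_nhdsWithin_of_tendsto_nhds (by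
      have : Continuous fun t : ℝ => f z + (1 - t) * (m / 2 * ‖w - z‖ ^ 2) := by fun_prop
      simpa using this.tendsto 0)
  exact le_of_tendsto hlim (mem_of_superset (Ioo_mem_nhdsGT one_pos) hseg)

lemma StrongConvexOn.le_apply_of_one_le_norm (hf : StrongConvexOn univ m f) {M : ℝ}
    (hM : ∀ u, ‖u‖ ≤ 1 → |f u| ≤ M) {z : E} (hz : 1 ≤ ‖z‖) :
    m / 2 * ‖z‖ ^ 2 - (m / 2 + 2 * M) * ‖z‖ ≤ f z := by
  -- strong convexity on the segment from `0` to `z`, at the unit vector `‖z‖⁻¹ • z`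
  have hr : 0 < ‖z‖ := one_pos.trans_le hz
  have hconv := hf.2 (mem_univ z) (mem_univ 0) (inv_nonneg.2 hr.le)
    (sub_nonneg.2 (inv_le_one_of_one_le₀ hz)) (add_sub_cancel ‖z‖⁻¹ 1)
  simp only [smul_zero, add_zero, sub_zero, smul_eq_mul] at hconv
  have hu : ‖‖z‖⁻¹ • z‖ = 1 := by rw [norm_smul, norm_inv, norm_norm, inv_mul_cancel₀ hr.ne']
  obtain ⟨hfu, -⟩ := abs_le.1 (hM _ hu.le)
  obtain ⟨-, hf0⟩ := abs_le.1 (hM 0 (by simp))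
  have hM0 : 0 ≤ M := (abs_nonneg _).trans (hM 0 (by simp))
  have hscaled : ‖z‖ * f (‖z‖⁻¹ • z) ≤ f z + (‖z‖ - 1) * f 0 - m / 2 * (‖z‖ - 1) * ‖z‖ := by
    refine (mul_le_mul_of_nonneg_left hconv hr.le).trans_eq ?_
    field_simp
  nlinarith [mul_le_mul_of_nonneg_left hfu hr.le, mul_le_mul_of_nonneg_left hf0 (sub_nonneg.2 hz)]

lemma StrongConvexOn.continuous [FiniteDimensional ℝ E] (hf : StrongConvexOn univ m f)
    (hm : 0 ≤ m) : Continuous f :=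
  continuousOn_univ.1 <| (hf.convexOn fun r => by positivity).continuousOn isOpen_univ

lemma StrongConvexOn.tendsto_cocompact_atTop [FiniteDimensional ℝ E]
    (hf : StrongConvexOn univ m f) (hm : 0 < m) : Tendsto f (cocompact E) atTop := by
  obtain ⟨M, hM⟩ := (isCompact_closedBall (0 : E) 1).exists_bound_of_continuousOn
    (hf.continuous hm.le).continuousOn
  have hquad : Tendsto (fun r : ℝ => m / 2 * r ^ 2 - (m / 2 + 2 * M) * r) atTop atTop := by
    have hlin : Tendsto (fun r : ℝ => m / 2 * r - (m / 2 + 2 * M)) atTop atTop :=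
      tendsto_atTop_add_const_right _ _ (tendsto_id.const_mul_atTop (by positivity))
    refine (tendsto_id.atTop_mul_atTop₀ hlin).congr fun r => ?_
    simp only [id]
    ring
  refine tendsto_atTop_mono' _ ?_ (hquad.comp tendsto_norm_cocompact_atTop)
  filter_upwards [tendsto_norm_cocompact_atTop.eventually_ge_atTop 1] with z hz
  exact hf.le_apply_of_one_le_norm (fun u hu => by simpa using hM u (by simpa using hu)) hz

lemma StrongConvexOn.exists_isMinOn [FiniteDimensional ℝ E] (hf : StrongConvexOn univ m f)
    (hm : 0 < m) : ∃ z, IsMinOn f univ z :=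
  let ⟨z, hz⟩ := (hf.continuous hm.le).exists_forall_le (hf.tendsto_cocompact_atTop hm)
  ⟨z, fun v _ => hz v⟩

lemma HasGradientAt.eq_of_forall_add_inner_le [CompleteSpace E] {f' v x : E}
    (hf : HasGradientAt f f' x) (hv : ∀ y, f x + ⟪v, y - x⟫ ≤ f y) : f' = v := by
  have hmin : IsLocalMin (fun y => f y - ⟪v, y⟫) x :=
    Eventually.of_forall fun y => by linarith [hv y, inner_sub_right (𝕜 := ℝ) v y x]
  have hzero := hmin.hasFDerivAt_eq_zero
    ((hasGradientAt_iff_hasFDerivAt.1 hf).sub (innerSL ℝ v).hasFDerivAt)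
  simpa only [sub_apply, InnerProductSpace.toDual_apply_apply, innerSL_apply_apply, zero_apply,
    ← inner_sub_left, inner_self_eq_zero, sub_eq_zero] using congrArg (fun L => L (f' - v)) hzero

end InnerProductSpace

section Conjugate

variable {n : ℕ} {φ : EuclideanSpace ℝ (Fin n) → ℝ} {y z : EuclideanSpace ℝ (Fin n)}

lemma conj_eq_of_isMinOn (hz : IsMinOn (fun v => φ v - ⟪v, y⟫) univ z) :
    conj φ y = ⟪z, y⟫ - φ z :=
  ciSup_eq_of_forall_le_of_forall_lt_exists_gt (fun v => by linarith [isMinOn_univ_iff.1 hz v])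
    fun _ hlt => ⟨z, hlt⟩

lemma le_conj_of_isMinOn (hz : IsMinOn (fun v => φ v - ⟪v, y⟫) univ z)
    (v : EuclideanSpace ℝ (Fin n)) : ⟪v, y⟫ - φ v ≤ conj φ y := by
  rw [conj_eq_of_isMinOn hz]
  linarith [isMinOn_univ_iff.1 hz v]

end Conjugate

/-- If `φ` is `α`-strongly convex and `φ*` is differentiable at `x` with gradient `g`,
then `φ(w) ≥ -φ*(x) + ⟪w, x⟫ + (α/2)‖w - ∇φ*(x)‖²` for all `w`. -/
theorem stmt1 {n : ℕ} (φ : EuclideanSpace ℝ (Fin n) → ℝ) (α : ℝ) (hα : 0 < α)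
    (hsc : ∀ x y : EuclideanSpace ℝ (Fin n), ∀ t : ℝ, t ∈ Icc (0 : ℝ) 1 →
      φ (t • x + (1 - t) • y) ≤
        t * φ x + (1 - t) * φ y - (α / 2) * t * (1 - t) * ‖x - y‖ ^ 2)
    (x g : EuclideanSpace ℝ (Fin n)) (hg : HasGradientAt (conj φ) g x) :
    ∀ w : EuclideanSpace ℝ (Fin n),
      φ w ≥ -conj φ x + (inner ℝ w x : ℝ) + (α / 2) * ‖w - g‖ ^ 2 := by
  have hφ : StrongConvexOn univ α φ := by
    refine ⟨convex_univ, fun a _ b _ t s ht hs hts => ?_⟩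
    obtain rfl : s = 1 - t := by linarith
    simp only [smul_eq_mul]
    linarith [hsc a b t ⟨ht, by linarith⟩]
  have hF : ∀ y, StrongConvexOn univ α fun v => φ v - ⟪v, y⟫ := fun y =>
    hφ.sub_concaveOn <| by
      simpa [real_inner_comm] using (innerSL ℝ y).toLinearMap.concaveOn convex_univ
  obtain ⟨z, hz⟩ := (hF x).exists_isMinOn hα
  have hgz : g = z := hg.eq_of_forall_add_inner_le fun y => by
    obtain ⟨zy, hzy⟩ := (hF y).exists_isMinOn hα
    rw [conj_eq_of_isMinOn hz, inner_sub_right]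
    linarith [le_conj_of_isMinOn hzy z]
  intro w
  have hgrowth := (hF x).add_sq_le_of_isMinOn (mem_univ z) (mem_univ w) hz
  rw [conj_eq_of_isMinOn hz, hgz]
  linarith
end
end

section
/- Suppose X, X̄ are random variables in ℝⁿ, Y in ℝᵐ, with X̄ independent of Y, X̄ ~ Law(X), and T: ℝⁿ × ℝᵐ → ℝⁿ measurable. If (T(X̄, Y), Y) has the same joint law as (X, Y), then for almost every y (w.r.t. the law of Y), the pushforward of Law(X) under T(·, y) equals the conditional law of X given Y = y. -/
/-!
Independence and `X̄ ~ X` give `Law(Y, X̄) = Law(Y) ⊗ Law(X)`, so `Law(Y, T(X̄, Y))` is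
`Law(Y) ⊗ₘ κ` for the kernel `κ y = T(·, y)#Law(X)`. By the hypothesis this is `Law(Y, X)`, and
the disintegration of a joint law along its first marginal is unique almost everywhere.
-/

open MeasureTheory ProbabilityTheory

namespace ProbabilityTheory.Kernel

variable {α β γ : Type*} [MeasurableSpace α] [MeasurableSpace β] [MeasurableSpace γ]

lemma const_prod_id_map_apply (ν : Measure α) [SFinite ν] {T : α × β → γ} (hT : Measurable T)
    (y : β) : (const β ν ×ₖ Kernel.id).map T y = ν.map (fun x => T (x, y)) := by
  rw [map_apply _ hT, prod_apply, const_apply, id_apply, Measure.prod_dirac,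
    Measure.map_map hT measurable_prodMk_right]
  rfl

end ProbabilityTheory.Kernel

namespace MeasureTheory.Measure

variable {α β γ : Type*} [MeasurableSpace α] [MeasurableSpace β] [MeasurableSpace γ]

lemma compProd_const_prod_id_map (μ : Measure β) [SFinite μ] (ν : Measure α) [SFinite ν]
    {T : α × β → γ} (hT : Measurable T) :
    μ ⊗ₘ (Kernel.const β ν ×ₖ Kernel.id).map T =
      (μ.prod ν).map (fun p => (p.1, T (p.2, p.1))) := by
  have hf : Measurable fun p : β × α => (p.1, T (p.2, p.1)) := by fun_prop
  ext s hs
  rw [compProd_apply hs, map_apply hf hs, prod_apply (hf hs)]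
  refine lintegral_congr fun y => ?_
  rw [Kernel.const_prod_id_map_apply ν hT, map_apply (by fun_prop) (measurable_prodMk_left hs)]
  rfl

end MeasureTheory.Measure

open Measure in
theorem condDistrib_ae_eq_of_indepFun_of_map_eq {Ω α β : Type*} [MeasurableSpace Ω]
    [MeasurableSpace α] [StandardBorelSpace α] [Nonempty α] [MeasurableSpace β]
    {μ : Measure Ω} [IsFiniteMeasure μ] {X Xbar : Ω → α} {Y : Ω → β}
    (hX : Measurable X) (hXbar : Measurable Xbar) (hY : Measurable Y)
    {T : α × β → α} (hT : Measurable T) (hindep : IndepFun Xbar Y μ)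
    (hcopy : μ.map Xbar = μ.map X)
    (hjoint : μ.map (fun ω => (T (Xbar ω, Y ω), Y ω)) = μ.map fun ω => (X ω, Y ω)) :
    condDistrib X Y μ =ᵐ[μ.map Y] (Kernel.const β (μ.map X) ×ₖ Kernel.id).map T := by
  refine condDistrib_ae_eq_of_measure_eq_compProd_of_measurable hY hX ?_
  have hYX : μ.map (fun ω => (Y ω, X ω)) = μ.map (fun ω => (Y ω, T (Xbar ω, Y ω))) := by
    have := congrArg (map Prod.swap) hjoint
    rwa [map_map measurable_swap (by fun_prop), map_map measurable_swap (by fun_prop),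
      eq_comm] at this
  have hYXbar : μ.map (fun ω => (Y ω, Xbar ω)) = (μ.map Y).prod (μ.map X) := by
    rw [← hcopy]
    exact (indepFun_iff_map_prod_eq_prod_map_map hY.aemeasurable hXbar.aemeasurable).mp
      hindep.symm
  rw [compProd_const_prod_id_map _ _ hT, ← hYXbar, map_map (by fun_prop) (by fun_prop), hYX]
  rfl

/-- If `X̄ ⟂ Y`, `X̄ ~ Law(X)`, and `(T(X̄,Y), Y)` has the same law as `(X, Y)`, then for
almost every `y`, the pushforward of `Law(X)` under `T(·,y)` is the conditional law of `X`
given `Y = y`. -/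
theorem stmt8 {n m : ℕ} {Ω : Type*} [MeasurableSpace Ω] (μ : Measure Ω)
    [IsProbabilityMeasure μ]
    (X Xbar : Ω → (Fin n → ℝ)) (Y : Ω → (Fin m → ℝ))
    (hX : Measurable X) (hXbar : Measurable Xbar) (hY : Measurable Y)
    (T : (Fin n → ℝ) × (Fin m → ℝ) → (Fin n → ℝ)) (hT : Measurable T)
    (hindep : IndepFun Xbar Y μ)
    (hcopy : μ.map Xbar = μ.map X)
    (hjoint : μ.map (fun ω => (T (Xbar ω, Y ω), Y ω)) = μ.map fun ω => (X ω, Y ω)) :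
    ∀ᵐ y ∂(μ.map Y),
      (μ.map X).map (fun x => T (x, y)) = condDistrib X Y μ y := by
  filter_upwards [condDistrib_ae_eq_of_indepFun_of_map_eq hX hXbar hY hT hindep hcopy hjoint]
    with y hy
  rw [hy, Kernel.const_prod_id_map_apply _ hT]
end

section
/- Conversely, if T: ℝⁿ × ℝᵐ → ℝⁿ is measurable and for almost every y the pushforward of Law(X) under T(·,y) equals the conditional law of X given Y = y, then with X̄ an independent copy of X (independent of Y), the pair (T(X̄, Y), Y) has the same joint law as (X, Y). -/
noncomputable section

open MeasureTheory ProbabilityTheory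

/-! Since `X̄` is independent of `Y`, the law of `(Y, T(X̄, Y))` is `Law(Y)` composed with the
kernel `y ↦ Law(X) ∘ T(·, y)⁻¹`. By hypothesis this kernel agrees `Law(Y)`-a.e. with the
conditional distribution of `X` given `Y`, and `Law(Y) ⊗ condDistrib X Y` is the disintegration
of `Law(Y, X)`. -/

namespace ProbabilityTheory

variable {Ω α β γ : Type*} [MeasurableSpace Ω] [MeasurableSpace α] [MeasurableSpace β]
  [MeasurableSpace γ]

def Kernel.mapSection (ν : Measure α) [SFinite ν] {T : α × β → γ} (hT : Measurable T) :
    Kernel β γ where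
  toFun y := ν.map fun x => T (x, y)
  measurable' := by
    have h_eq : (fun y => ν.map fun x => T (x, y)) = fun y => (ν.map fun x => (x, y)).map T := by
      funext y
      rw [Measure.map_map hT measurable_prodMk_right]
      rfl
    rw [h_eq]
    exact (Measure.measurable_map T hT).comp Measurable.map_prodMk_right

namespace Kernel

variable (ν : Measure α) {T : α × β → γ} (hT : Measurable T)

@[simp]
lemma mapSection_apply [SFinite ν] (y : β) : mapSection ν hT y = ν.map fun x => T (x, y) := rfl

instance [IsFiniteMeasure ν] : IsFiniteKernel (mapSection ν hT) :=
  ⟨⟨ν Set.univ, measure_lt_top ν _, fun y => by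
    rw [mapSection_apply, Measure.map_apply (by fun_prop) MeasurableSet.univ]
    rfl⟩⟩

end Kernel

lemma _root_.MeasureTheory.Measure.compProd_mapSection (ρ : Measure β) [SFinite ρ]
    (ν : Measure α) [IsFiniteMeasure ν] {T : α × β → γ} (hT : Measurable T) :
    ρ ⊗ₘ Kernel.mapSection ν hT = (ρ.prod ν).map fun p => (p.1, T (p.2, p.1)) := by
  ext s hs
  rw [Measure.compProd_apply hs, Measure.map_apply (by fun_prop) hs,
    Measure.prod_apply (hs.preimage (by fun_prop))]
  refine lintegral_congr fun y => ?_
  rw [Kernel.mapSection_apply, Measure.map_apply (by fun_prop) (measurable_prodMk_left hs)]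
  rfl

lemma IndepFun.map_prodMk_eq_compProd_mapSection {μ : Measure Ω} [IsFiniteMeasure μ]
    {X : Ω → α} {Y : Ω → β} (hX : Measurable X) (hY : Measurable Y) (hXY : IndepFun X Y μ)
    {T : α × β → γ} (hT : Measurable T) :
    μ.map (fun ω => (Y ω, T (X ω, Y ω))) = μ.map Y ⊗ₘ Kernel.mapSection (μ.map X) hT := by
  have h_indep : μ.map (fun ω => (Y ω, X ω)) = (μ.map Y).prod (μ.map X) :=
    (indepFun_iff_map_prod_eq_prod_map_map hY.aemeasurable hX.aemeasurable).mp hXY.symm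
  rw [Measure.compProd_mapSection, ← h_indep, Measure.map_map (by fun_prop) (by fun_prop)]
  rfl

lemma _root_.MeasureTheory.Measure.map_prodMk_eq_of_map_prodMk_swap_eq {μ : Measure Ω}
    {f f' : Ω → α} {g g' : Ω → β}
    (hf : Measurable f) (hf' : Measurable f') (hg : Measurable g) (hg' : Measurable g')
    (h : μ.map (fun ω => (g ω, f ω)) = μ.map (fun ω => (g' ω, f' ω))) :
    μ.map (fun ω => (f ω, g ω)) = μ.map (fun ω => (f' ω, g' ω)) := by
  have h_swap := congrArg (Measure.map Prod.swap) h
  rwa [Measure.map_map measurable_swap (hg.prodMk hf),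
    Measure.map_map measurable_swap (hg'.prodMk hf')] at h_swap

end ProbabilityTheory

/-- Conversely: if for almost every `y` the pushforward of `Law(X)` under `T(·,y)` equals the
conditional law of `X` given `Y = y`, then with `X̄` an independent copy of `X` (independent
of `Y`), the pair `(T(X̄,Y), Y)` has the same joint law as `(X, Y)`. -/
theorem stmt9 {n m : ℕ} {Ω : Type*} [MeasurableSpace Ω] (μ : Measure Ω)
    [IsProbabilityMeasure μ]
    (X Xbar : Ω → (Fin n → ℝ)) (Y : Ω → (Fin m → ℝ))
    (hX : Measurable X) (hXbar : Measurable Xbar) (hY : Measurable Y)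
    (T : (Fin n → ℝ) × (Fin m → ℝ) → (Fin n → ℝ)) (hT : Measurable T)
    (hindep : IndepFun Xbar Y μ)
    (hcopy : μ.map Xbar = μ.map X)
    (hae : ∀ᵐ y ∂(μ.map Y),
      (μ.map X).map (fun x => T (x, y)) = condDistrib X Y μ y) :
    μ.map (fun ω => (T (Xbar ω, Y ω), Y ω)) = μ.map fun ω => (X ω, Y ω) := by
  have h_kernel : Kernel.mapSection (μ.map Xbar) hT =ᵐ[μ.map Y] condDistrib X Y μ := by
    filter_upwards [hae] with y hy
    rw [Kernel.mapSection_apply, hcopy, hy]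
  refine Measure.map_prodMk_eq_of_map_prodMk_swap_eq (by fun_prop) hX hY hY ?_
  rw [hindep.map_prodMk_eq_compProd_mapSection hXbar hY hT, Measure.compProd_congr h_kernel,
    compProd_map_condDistrib hX.aemeasurable]
end
end
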